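/- arXiv:2102.11711 — 2 statements merged into one kernel-verified Lean document; each statement's English description precedes it below -/
import Mathlib

section
/- Let α ∈ (0,1) and τ > 0, and let λ₂ < 0 be the unique negative real zero of f(p) = 1 − α e^{−τp} − p. Then every nonreal complex root p ∈ ℂ of the characteristic equation 1 − α e^{−τp} − p = 0 satisfies Re p < λ₂. In particular, the characteristic equation has exactly one root (namely the positive real root λ₁) with positive real part. -/
/-!
Write `f x = 1 - α e^{-τx} - x` for the real characteristic function. Since `e^u ≥ 1 + u`, `f` lies
below each of its tangent lines. For a nonreal root `p = x + iy`, the imaginary part of the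
equation, `y = α e^{-τx} sin (τy)`, together with `|sin t| < |t|` gives `f' x > 0`, and the real
part gives `f x = α e^{-τx} (cos (τy) - 1) < 0`. The tangent line at `x` then stays negative on
`[x, ∞)`, so the zero `λ₂` of `f` lies to the left of `x`. Hence roots with `Re p > 0 > λ₂` are
real, and the same tangent-line bound shows that `f`, positive at `0`, has exactly one positive zero.
-/

/-- The complex characteristic function of the Suarez–Schopf model at the zero equilibrium:
`p ↦ 1 - α * exp (-τ * p) - p`, `p ∈ ℂ`. -/
noncomputable def SScharC (α τ : ℝ) (p : ℂ) : ℂ :=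
  1 - (α : ℂ) * Complex.exp (-(τ : ℂ) * p) - p

open Real

noncomputable def SSchar (α τ x : ℝ) : ℝ :=
  1 - α * exp (-τ * x) - x

lemma SScharC_ofReal (α τ x : ℝ) : SScharC α τ x = SSchar α τ x := by
  simp only [SScharC, SSchar]
  push_cast
  ring_nf

lemma SScharC_eq_zero_iff (α τ : ℝ) (p : ℂ) :
    SScharC α τ p = 0 ↔ p.re = 1 - α * exp (-τ * p.re) * cos (τ * p.im) ∧
      p.im = α * exp (-τ * p.re) * sin (τ * p.im) := by
  have hre : (SScharC α τ p).re = 1 - α * exp (-τ * p.re) * cos (τ * p.im) - p.re := by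
    simp only [SScharC, neg_mul, Complex.sub_re, Complex.one_re, Complex.mul_re, Complex.ofReal_re,
      Complex.exp_re, Complex.neg_re, Complex.ofReal_im, zero_mul, sub_zero, Complex.neg_im,
      Complex.mul_im, add_zero, cos_neg, mul_assoc]
  have him : (SScharC α τ p).im = α * exp (-τ * p.re) * sin (τ * p.im) - p.im := by
    simp only [SScharC, neg_mul, Complex.sub_im, Complex.one_im, Complex.mul_im, Complex.ofReal_re,
      Complex.exp_im, Complex.neg_re, Complex.mul_re, Complex.ofReal_im, zero_mul, sub_zero,
      Complex.neg_im, add_zero, sin_neg, mul_neg, sub_neg_eq_add, zero_add, mul_assoc]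
  rw [Complex.ext_iff, hre, him, Complex.zero_re, Complex.zero_im, sub_eq_zero, sub_eq_zero,
    eq_comm, @eq_comm _ _ p.im]

lemma SSchar_le_tangent {α : ℝ} (hα : 0 ≤ α) (τ x y : ℝ) :
    SSchar α τ y ≤ SSchar α τ x + (α * τ * exp (-τ * x) - 1) * (y - x) := by
  have hexp : exp (-τ * x) * (1 - τ * (y - x)) ≤ exp (-τ * y) := by
    calc exp (-τ * x) * (1 - τ * (y - x)) ≤ exp (-τ * x) * exp (-τ * (y - x)) := by
          gcongr; linarith [add_one_le_exp (-τ * (y - x))]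
      _ = exp (-τ * y) := by rw [← exp_add]; ring_nf
  simp only [SSchar]
  nlinarith [mul_le_mul_of_nonneg_left hexp hα]

lemma one_lt_mul_exp_of_SScharC_eq_zero {α τ : ℝ} (hα : 0 < α) (hτ : 0 < τ) {p : ℂ}
    (hp : SScharC α τ p = 0) (him : p.im ≠ 0) : 1 < α * τ * exp (-τ * p.re) := by
  obtain ⟨-, hy⟩ := (SScharC_eq_zero_iff α τ p).1 hp
  have hsin : |sin (τ * p.im)| < τ * |p.im| := by
    simpa [abs_mul, abs_of_pos hτ] using abs_sin_lt_abs (mul_ne_zero hτ.ne' him)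
  have hE : 0 < α * exp (-τ * p.re) := by positivity
  have : |p.im| < α * τ * exp (-τ * p.re) * |p.im| :=
    calc |p.im| = α * exp (-τ * p.re) * |sin (τ * p.im)| := by
          conv_lhs => rw [hy]
          rw [abs_mul, abs_of_pos hE]
      _ < α * exp (-τ * p.re) * (τ * |p.im|) := by gcongr
      _ = α * τ * exp (-τ * p.re) * |p.im| := by ring
  exact (lt_mul_iff_one_lt_left (abs_pos.2 him)).1 this

lemma SSchar_re_neg_of_SScharC_eq_zero {α : ℝ} (hα : 0 < α) (τ : ℝ) {p : ℂ}
    (hp : SScharC α τ p = 0) (him : p.im ≠ 0) : SSchar α τ p.re < 0 := by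
  obtain ⟨hx, hy⟩ := (SScharC_eq_zero_iff α τ p).1 hp
  have hcos : cos (τ * p.im) < 1 := by
    refine (cos_le_one _).lt_of_ne fun h => him ?_
    rw [hy, sin_eq_zero_iff_cos_eq.2 (Or.inl h), mul_zero]
  have hE : 0 < α * exp (-τ * p.re) := by positivity
  simp only [SSchar]
  nlinarith

lemma lt_of_SSchar_neg {α τ l x : ℝ} (hα : 0 ≤ α) (hl : SSchar α τ l = 0)
    (hx : SSchar α τ x < 0) (hslope : 1 < α * τ * exp (-τ * x)) : x < l := by
  by_contra! hle
  nlinarith [SSchar_le_tangent hα τ x l]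

lemma eq_of_SSchar_eq_zero {α τ a b : ℝ} (hα₀ : 0 ≤ α) (hα₁ : α < 1) (ha : 0 < a) (hb : 0 < b)
    (hfa : SSchar α τ a = 0) (hfb : SSchar α τ b = 0) : a = b := by
  have h0 : 0 < SSchar α τ 0 := by simp [SSchar, hα₁]
  wlog hab : a < b generalizing a b
  · rcases (not_lt.1 hab).lt_or_eq with h | h
    · exact (this hb ha hfb hfa h).symm
    · exact h.symm
  -- `f 0 > 0 = f a` forces the tangent at `a` to slope downwards, and `f` stays below it.
  have hslope : α * τ * exp (-τ * a) - 1 < 0 := by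
    nlinarith [SSchar_le_tangent hα₀ τ a 0]
  nlinarith [SSchar_le_tangent hα₀ τ a b]

lemma exists_pos_SSchar_eq_zero {α : ℝ} (hα₀ : 0 < α) (hα₁ : α < 1) (τ : ℝ) :
    ∃ a, 0 < a ∧ SSchar α τ a = 0 := by
  have hcont : ContinuousOn (SSchar α τ) (Set.Icc 0 1) := by
    unfold SSchar; fun_prop
  have h1 : SSchar α τ 1 < 0 := by simp only [SSchar]; nlinarith [exp_pos (-τ * 1)]
  have h0 : 0 < SSchar α τ 0 := by simp [SSchar, hα₁]
  obtain ⟨a, ha, hfa⟩ := intermediate_value_Ioo' zero_le_one hcont ⟨h1, h0⟩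
  exact ⟨a, ha.1, hfa⟩

/-- Let `α ∈ (0,1)`, `τ > 0` and let `λ₂ < 0` be the (unique) negative real zero of
`f p = 1 - α e^{-τp} - p`. Then every nonreal complex characteristic root `p` satisfies
`Re p < λ₂`; in particular, the characteristic equation has exactly one root with positive
real part (the positive real root). -/
theorem suarez_schopf_nonreal_roots_left (α τ l₂ : ℝ) (hα : α ∈ Set.Ioo (0 : ℝ) 1)
    (hτ : 0 < τ) (hl₂ : l₂ < 0) (hzero : 1 - α * Real.exp (-τ * l₂) - l₂ = 0) :
    (∀ p : ℂ, SScharC α τ p = 0 → p.im ≠ 0 → p.re < l₂) ∧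
    (∃! p : ℂ, SScharC α τ p = 0 ∧ 0 < p.re) := by
  obtain ⟨hα₀, hα₁⟩ := hα
  have nonreal : ∀ p : ℂ, SScharC α τ p = 0 → p.im ≠ 0 → p.re < l₂ := fun p hp him =>
    lt_of_SSchar_neg hα₀.le hzero (SSchar_re_neg_of_SScharC_eq_zero hα₀ τ hp him)
      (one_lt_mul_exp_of_SScharC_eq_zero hα₀ hτ hp him)
  refine ⟨nonreal, ?_⟩
  obtain ⟨a, ha, hfa⟩ := exists_pos_SSchar_eq_zero hα₀ hα₁ τ
  refine ⟨a, ⟨by rw [SScharC_ofReal, hfa, Complex.ofReal_zero], ha⟩, ?_⟩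
  rintro q ⟨hq, hq_re⟩
  have hq_im : q.im = 0 := by
    by_contra him
    linarith [nonreal q hq him]
  have hq_real : (q.re : ℂ) = q := Complex.ext rfl (by simp [hq_im])
  rw [← hq_real, SScharC_ofReal, Complex.ofReal_eq_zero] at hq
  rw [← hq_real, eq_of_SSchar_eq_zero hα₀.le hα₁ hq_re ha hq hfa]
end

section
/- Let α ∈ (1/2, 1). The set of delays τ > 0 for which the characteristic equation 3α − 2 − α e^{−τp} − p = 0 has a purely imaginary root p = iζ with ζ ∈ ℝ, ζ ≠ 0, has a smallest element, equal to arccos((3α − 2)/α) / √(α² − (3α − 2)²) (the neutral curve value). -/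
/-!
On the imaginary axis the characteristic equation splits into `α cos(τζ) = 3α - 2` and
`α sin(τζ) = ζ`. Squaring and adding forces `|ζ| = √(α² - (3α - 2)²)`, and then `τ|ζ|` is a
nonnegative angle with cosine `(3α - 2)/α`, hence at least `arccos((3α - 2)/α)`. Conversely the
angle `arccos((3α - 2)/α)` itself, with `ζ = √(α² - (3α - 2)²)`, solves both equations.
-/

/-- The complex characteristic function of the Suarez–Schopf model at the symmetric
equilibria `±√(1-α)`: `p ↦ 3α - 2 - α * exp (-τ * p) - p`, `p ∈ ℂ`. -/
noncomputable def SScharSymC (α τ : ℝ) (p : ℂ) : ℂ :=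
  3 * (α : ℂ) - 2 - (α : ℂ) * Complex.exp (-(τ : ℂ) * p) - p

open Real

lemma SScharSymC_I_mul_eq_zero_iff (α τ ζ : ℝ) :
    SScharSymC α τ (Complex.I * ζ) = 0 ↔
      α * cos (τ * ζ) = 3 * α - 2 ∧ α * sin (τ * ζ) = ζ := by
  have hexp : Complex.exp (-τ * (Complex.I * ζ)) = cos (τ * ζ) - sin (τ * ζ) * Complex.I := by
    rw [show -(τ : ℂ) * (Complex.I * ζ) = (-(τ * ζ) : ℝ) * Complex.I by push_cast; ring,
      Complex.exp_mul_I, ← Complex.ofReal_cos, ← Complex.ofReal_sin, cos_neg, sin_neg]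
    push_cast; ring
  rw [SScharSymC, hexp, Complex.ext_iff]
  simp only [Complex.sub_re, Complex.sub_im, Complex.mul_re, Complex.mul_im, Complex.ofReal_re,
    Complex.ofReal_im, Complex.I_re, Complex.I_im, Complex.re_ofNat, Complex.im_ofNat,
    Complex.zero_re, Complex.zero_im]
  constructor <;> rintro ⟨h1, h2⟩ <;> constructor <;> linarith

lemma arccos_cos_le {θ : ℝ} (hθ : 0 ≤ θ) : arccos (cos θ) ≤ θ := by
  rcases le_or_gt θ π with h | h
  · rw [arccos_cos hθ h]
  · exact (arccos_le_pi _).trans h.le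

lemma mul_cos_arccos_div {a b : ℝ} (ha : 0 < a) (hb : |b| ≤ a) :
    a * cos (arccos (b / a)) = b := by
  obtain ⟨hb₁, hb₂⟩ := abs_le.1 hb
  rw [cos_arccos ((le_div_iff₀ ha).2 (by linarith)) ((div_le_one ha).2 hb₂),
    mul_div_cancel₀ _ ha.ne']

lemma mul_sin_arccos_div {a b : ℝ} (ha : 0 < a) :
    a * sin (arccos (b / a)) = √(a ^ 2 - b ^ 2) := by
  have h : a ^ 2 - b ^ 2 = a ^ 2 * (1 - (b / a) ^ 2) := by field_simp
  rw [sin_arccos, h, sqrt_mul (sq_nonneg a), sqrt_sq ha.le]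

lemma arccos_div_sqrt_le_of_SScharSymC_eq_zero {α τ ζ : ℝ} (hτ : 0 ≤ τ) (hζ : ζ ≠ 0)
    (hroot : SScharSymC α τ (Complex.I * ζ) = 0) :
    arccos ((3 * α - 2) / α) / √(α ^ 2 - (3 * α - 2) ^ 2) ≤ τ := by
  obtain ⟨hcos, hsin⟩ := (SScharSymC_I_mul_eq_zero_iff α τ ζ).1 hroot
  have hα : α ≠ 0 := by rintro rfl; linarith
  have hζ_sq : α ^ 2 - (3 * α - 2) ^ 2 = ζ ^ 2 := by
    linear_combination (-α ^ 2) * sin_sq_add_cos_sq (τ * ζ) + (α * sin (τ * ζ) + ζ) * hsin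
      + (α * cos (τ * ζ) + (3 * α - 2)) * hcos
  have hc : (3 * α - 2) / α = cos (τ * |ζ|) := by
    rw [← hcos, mul_div_cancel_left₀ _ hα, ← cos_abs (τ * ζ), abs_mul, abs_of_nonneg hτ]
  rw [hζ_sq, sqrt_sq_eq_abs, div_le_iff₀ (abs_pos.2 hζ), hc]
  exact arccos_cos_le (by positivity)

/-- Let `α ∈ (1/2, 1)`. The set of delays `τ > 0` for which the characteristic equation
`3α - 2 - α e^{-τp} - p = 0` has a purely imaginary root `p = iζ`, `ζ ≠ 0`, has a smallest
element, equal to the neutral curve value `arccos((3α-2)/α) / √(α² - (3α-2)²)`. -/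
theorem suarez_schopf_neutral_curve_least (α : ℝ) (hα : α ∈ Set.Ioo (1 / 2 : ℝ) 1) :
    IsLeast {τ : ℝ | 0 < τ ∧ ∃ ζ : ℝ, ζ ≠ 0 ∧ SScharSymC α τ (Complex.I * (ζ : ℂ)) = 0}
      (Real.arccos ((3 * α - 2) / α) / Real.sqrt (α ^ 2 - (3 * α - 2) ^ 2)) := by
  obtain ⟨hα₁, hα₂⟩ := hα
  have hα_pos : 0 < α := by linarith
  have hb : |3 * α - 2| < α := abs_lt.2 ⟨by linarith, by linarith⟩
  set s := √(α ^ 2 - (3 * α - 2) ^ 2)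
  have hs : 0 < s := sqrt_pos.2 (sub_pos.2 (sq_lt_sq' (by linarith) (by linarith)))
  have hθ : 0 < arccos ((3 * α - 2) / α) := arccos_pos.2 ((div_lt_one hα_pos).2 (by linarith))
  refine ⟨⟨div_pos hθ hs, s, hs.ne', ?_⟩, fun τ ⟨hτ, ζ, hζ, hroot⟩ ↦
    arccos_div_sqrt_le_of_SScharSymC_eq_zero hτ.le hζ hroot⟩
  rw [SScharSymC_I_mul_eq_zero_iff, div_mul_cancel₀ _ hs.ne']
  exact ⟨mul_cos_arccos_div hα_pos hb.le, mul_sin_arccos_div hα_pos⟩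
end
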